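/- Under the same hypotheses, for every t > 0, ∫_M |U_t^+(v)(γ)(k)|²/min(1, t·ω(k)) dμ(k) ≤ ‖v/ω‖²_{L²}. -/

import Mathlib

/-!
The bound holds pointwise in `k`. Since `|γ| ≤ 1`, the time integral is dominated by
`∫₀ᵗ e^{-sω} ds = (1 - e^{-tω}) / ω`, and `a := 1 - e^{-tω}` satisfies `0 ≤ a ≤ min 1 (tω)`,
so `a² ≤ a · min 1 (tω) ≤ min 1 (tω)`.
-/

open MeasureTheory Real

theorem integral_exp_neg_mul {c : ℝ} (hc : c ≠ 0) (t : ℝ) :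
    ∫ s in (0:ℝ)..t, exp (-s * c) = (1 - exp (-t * c)) / c := by
  have h := intervalIntegral.integral_comp_mul_right exp (neg_ne_zero.mpr hc) (a := 0) (b := t)
  simp only [mul_neg, neg_mul, zero_mul, integral_exp, neg_zero, exp_zero, smul_eq_mul] at h ⊢
  rw [h]
  field_simp
  ring

theorem one_sub_exp_neg_sq_le_min {x : ℝ} (hx : 0 ≤ x) : (1 - exp (-x)) ^ 2 ≤ min 1 x := by
  have h0 : 0 ≤ 1 - exp (-x) := sub_nonneg.mpr (exp_le_one_iff.mpr (neg_nonpos.mpr hx))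
  have h1 : 1 - exp (-x) ≤ 1 := sub_le_self 1 (exp_pos _).le
  have hlin : 1 - exp (-x) ≤ x := by linarith [add_one_le_exp (-x)]
  calc (1 - exp (-x)) ^ 2 = (1 - exp (-x)) * (1 - exp (-x)) := sq _
    _ ≤ (1 - exp (-x)) * min 1 x := mul_le_mul_of_nonneg_left (le_min h1 hlin) h0
    _ ≤ 1 * min 1 x := mul_le_mul_of_nonneg_right h1 (le_min zero_le_one hx)
    _ = min 1 x := one_mul _

theorem abs_integral_exp_neg_mul_mul_le {c t : ℝ} (hc : c ≠ 0) (ht : 0 ≤ t) {γ : ℝ → ℝ}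
    (hγ : ∀ s, |γ s| ≤ 1) :
    |∫ s in (0:ℝ)..t, exp (-s * c) * γ s| ≤ (1 - exp (-t * c)) / c := by
  have hbound : ∀ s, ‖exp (-s * c) * γ s‖ ≤ exp (-s * c) := fun s => by
    rw [norm_mul, norm_of_nonneg (exp_pos _).le]
    exact mul_le_of_le_one_right (exp_pos _).le (hγ s)
  have hint : IntervalIntegrable (fun s => exp (-s * c)) volume 0 t :=
    (by fun_prop : Continuous fun s : ℝ => exp (-s * c)).intervalIntegrable 0 t
  have h := intervalIntegral.norm_integral_le_abs_of_norm_le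
    (Filter.Eventually.of_forall hbound) hint
  have hpos : 0 ≤ ∫ s in (0:ℝ)..t, exp (-s * c) :=
    intervalIntegral.integral_nonneg ht fun s _ => (exp_pos _).le
  rwa [Real.norm_eq_abs, abs_of_nonneg hpos, integral_exp_neg_mul hc] at h

theorem sq_integral_exp_neg_mul_mul_le {c t : ℝ} (hc : 0 < c) (ht : 0 ≤ t) {γ : ℝ → ℝ}
    (hγ : ∀ s, |γ s| ≤ 1) :
    (∫ s in (0:ℝ)..t, exp (-s * c) * γ s) ^ 2 ≤ min 1 (t * c) / c ^ 2 := by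
  calc (∫ s in (0:ℝ)..t, exp (-s * c) * γ s) ^ 2
      = |∫ s in (0:ℝ)..t, exp (-s * c) * γ s| ^ 2 := (sq_abs _).symm
    _ ≤ ((1 - exp (-t * c)) / c) ^ 2 :=
        pow_le_pow_left₀ (abs_nonneg _) (abs_integral_exp_neg_mul_mul_le hc.ne' ht hγ) 2
    _ = (1 - exp (-(t * c))) ^ 2 / c ^ 2 := by rw [div_pow, neg_mul]
    _ ≤ min 1 (t * c) / c ^ 2 := by
        gcongr
        exact one_sub_exp_neg_sq_le_min (mul_nonneg ht hc.le)

theorem Uplus_weighted_bound_general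
    {M : Type*} [MeasurableSpace M] (μ : Measure M)
    (ω : M → ℝ) (hωpos : ∀ k, 0 < ω k)
    (v : M → ℂ)
    (γ : ℝ → ℝ) (hγval : ∀ s, γ s = 1 ∨ γ s = -1)
    (t : ℝ) (ht : 0 < t) :
    ∫⁻ k, ENNReal.ofReal
        (‖(∫ s in (0:ℝ)..t, Real.exp (-s * ω k) * γ s) • v k‖ ^ 2
          / min 1 (t * ω k)) ∂μ
      ≤ ∫⁻ k, ENNReal.ofReal (‖v k / (ω k : ℂ)‖ ^ 2) ∂μ := by
  refine lintegral_mono fun k => ENNReal.ofReal_le_ofReal ?_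
  have hγ : ∀ s, |γ s| ≤ 1 := fun s => by rcases hγval s with h | h <;> simp [h]
  have hmin : 0 < min 1 (t * ω k) := lt_min one_pos (mul_pos ht (hωpos k))
  rw [div_le_iff₀ hmin, norm_smul, mul_pow, Real.norm_eq_abs, sq_abs, norm_div,
    Complex.norm_real, Real.norm_of_nonneg (hωpos k).le, div_pow]
  calc (∫ s in (0:ℝ)..t, exp (-s * ω k) * γ s) ^ 2 * ‖v k‖ ^ 2
      ≤ min 1 (t * ω k) / ω k ^ 2 * ‖v k‖ ^ 2 := by
        gcongr
        exact sq_integral_exp_neg_mul_mul_le (hωpos k) ht.le hγ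
    _ = ‖v k‖ ^ 2 / ω k ^ 2 * min 1 (t * ω k) := by ring

/-- The weighted bound
`∫_M |U_t^+(v)(γ)(k)|² / min(1, t·ω(k)) dμ(k) ≤ ‖v/ω‖²_{L²}`. -/
theorem Uplus_weighted_bound
    {M : Type*} [MeasurableSpace M] (μ : Measure M) [SigmaFinite μ]
    (ω : M → ℝ) (hωm : Measurable ω) (hωpos : ∀ k, 0 < ω k)
    (v : M → ℂ) (hvm : Measurable v)
    (hvω : MemLp (fun k => v k / (ω k : ℂ)) 2 μ)
    (γ : ℝ → ℝ) (hγval : ∀ s, γ s = 1 ∨ γ s = -1)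
    (hγrc : ∀ s, ContinuousWithinAt γ (Set.Ici s) s)
    (t : ℝ) (ht : 0 < t) :
    ∫⁻ k, ENNReal.ofReal
        (‖(∫ s in (0:ℝ)..t, Real.exp (-s * ω k) * γ s) • v k‖ ^ 2
          / min 1 (t * ω k)) ∂μ
      ≤ ∫⁻ k, ENNReal.ofReal (‖v k / (ω k : ℂ)‖ ^ 2) ∂μ :=
  Uplus_weighted_bound_general μ ω hωpos v γ hγval t ht
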